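/- Let G be a deductive filter of a square-increasing IRL A. Then the quotient A/G is idempotent if and only if ¬(f²) ∈ G, where f := ¬e. In particular, A/[¬(f²)) is idempotent, where [a) denotes the upward closure of a. -/
import Mathlib


/-- An involutive commutative residuated lattice (IRL): a commutative monoid with a
lattice order and an involution `neg` satisfying `x * y ≤ z ↔ neg z * y ≤ neg x`. -/
class IRL (α : Type*) extends Lattice α, CommMonoid α where
  neg : α → α
  neg_neg : ∀ x : α, neg (neg x) = x
  res : ∀ x y z : α, x * y ≤ z ↔ neg z * y ≤ neg x

namespace IRL

variable {α : Type*} [IRL α]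

/-- Residuation operation `x → y := ¬(x · ¬y)`. -/
def arr (x y : α) : α := neg (x * neg y)

end IRL

namespace IRL

variable {α : Type*} [IRL α]

lemma neg_anti {x y : α} (h : x ≤ y) : neg y ≤ neg x := by
  have := (res x 1 y).mp (by simpa using h)
  simpa using this

lemma mul_le_left {x x' : α} (y : α) (h : x ≤ x') : x * y ≤ x' * y := by
  have h1 : neg (x' * y) * y ≤ neg x' := (res x' y (x' * y)).mp le_rfl
  exact (res x y (x' * y)).mpr (h1.trans (neg_anti h))

lemma mul_le {x x' y y' : α} (hx : x ≤ x') (hy : y ≤ y') : x * y ≤ x' * y' := by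
  calc x * y ≤ x' * y := mul_le_left y hx
  _ = y * x' := mul_comm _ _
  _ ≤ y' * x' := mul_le_left x' hy
  _ = x' * y' := mul_comm _ _

lemma mul_neg_le {x y : α} (h : y ≤ neg x) : x * y ≤ neg 1 := by
  refine (res x y (neg 1)).mpr ?_
  simpa [neg_neg]

end IRL

open IRL in
/-- For a deductive filter `G` of a square-increasing IRL, the quotient `A/ΩG` is
idempotent iff `¬(f²) ∈ G`; idempotence of the quotient is expressed by
`⟨a², a⟩ ∈ ΩG` for all `a`. In particular `A/[¬(f²))` is idempotent. -/
theorem stmt7 {α : Type*} [IRL α] (sq : ∀ x : α, x ≤ x * x)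
    (G : Set α)
    (hsub : (1 : α) ∈ G) (hmul : ∀ x ∈ G, ∀ y ∈ G, x * y ∈ G)
    (hinf : ∀ x ∈ G, ∀ y ∈ G, x ⊓ y ∈ G)
    (hup : ∀ x ∈ G, ∀ y : α, x ≤ y → y ∈ G) :
    ((∀ a : α, arr (a * a) a ∈ G ∧ arr a (a * a) ∈ G) ↔ neg (neg 1 * neg 1) ∈ G) ∧
    (∀ a : α, arr (a * a) a ∈ {x : α | neg ((neg 1 : α) * neg 1) ≤ x} ∧
      arr a (a * a) ∈ {x : α | neg ((neg 1 : α) * neg 1) ≤ x}) := by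
  have key2 : ∀ a : α, neg ((neg 1 : α) * neg 1) ≤ arr (a * a) a ∧
      neg ((neg 1 : α) * neg 1) ≤ arr a (a * a) := by
    intro a
    constructor
    · apply neg_anti
      calc a * a * neg a ≤ (a * a) * (neg a * neg a) := mul_le le_rfl (sq _)
        _ = (a * neg a) * (a * neg a) := mul_mul_mul_comm a a (neg a) (neg a)
        _ ≤ neg 1 * neg 1 := mul_le (mul_neg_le le_rfl) (mul_neg_le le_rfl)
    · apply neg_anti
      have h1 : a * neg (a * a) ≤ neg 1 := mul_neg_le (neg_anti (sq a))
      exact (sq _).trans (mul_le h1 h1)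
  refine ⟨⟨fun H => ?_, fun h a => ⟨hup _ h _ (key2 a).1, hup _ h _ (key2 a).2⟩⟩,
    fun a => ⟨(key2 a).1, (key2 a).2⟩⟩
  have := (H (neg 1)).1
  simpa [arr, IRL.neg_neg] using this
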